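/- Let I be a real interval centered at 0 with [−1,1] ⊆ I and let f : Iⁿ → ℝ be a function such that the restriction of f to (I ∩ ℝ₊)ⁿ or to (I ∩ ℝ₋)ⁿ is nonconstant. Then the following are equivalent: (i) f is a symmetric quasi-Lovász extension and there exists A ⊆ [n] such that f_0(1_A) ≠ 0; (ii) f is comonotonically modular and f_0 is oddly homogeneous; (iii) there is a nondecreasing odd function φ_f : I → ℝ with φ_f(1) = 1 such that f = Ľ_{f|_{{0,1}ⁿ}} ∘ φ_f, where Ľ_{f|_{{0,1}ⁿ}} is the symmetric Lovász extension of the restriction of f to {0,1}ⁿ. -/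

import Mathlib

open Finset

/-- The indicator tuple `1_A` of a subset `A ⊆ [n]`. -/
def ind {n : ℕ} (A : Finset (Fin n)) : Fin n → ℝ := fun i => if i ∈ A then 1 else 0

/-- The Möbius transform of a pseudo-Boolean function (viewed as a set function). -/
def mobius {n : ℕ} (ψ : Finset (Fin n) → ℝ) (A : Finset (Fin n)) : ℝ :=
  ∑ B ∈ A.powerset, (-1 : ℝ) ^ (A.card - B.card) * ψ B

/-- `min_{i ∈ A} x i` (with value `0` for `A = ∅`). -/
def minOnFin {n : ℕ} (A : Finset (Fin n)) (x : Fin n → ℝ) : ℝ :=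
  if h : A.Nonempty then A.inf' h x else 0

/-- The Lovász extension of a pseudo-Boolean function `ψ` (viewed as a set function):
`L_ψ(x) = a_ψ(∅) + Σ_{∅ ≠ A ⊆ [n]} a_ψ(A) · min_{i ∈ A} x_i`. -/
def Lov {n : ℕ} (ψ : Finset (Fin n) → ℝ) (x : Fin n → ℝ) : ℝ :=
  mobius ψ ∅ + ∑ A : Finset (Fin n), mobius ψ A * minOnFin A x

/-- `x ∈ ℝⁿ_σ`, i.e. `x_{σ(1)} ≤ ⋯ ≤ x_{σ(n)}`. -/
def inRσ {n : ℕ} (σ : Equiv.Perm (Fin n)) (x : Fin n → ℝ) : Prop :=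
  ∀ i j : Fin n, i ≤ j → x (σ i) ≤ x (σ j)

/-- `A_σ^↑(k) = {σ(j) : j ≥ k}` (0-indexed; `Aup σ n = ∅`). -/
def Aup {n : ℕ} (σ : Equiv.Perm (Fin n)) (k : ℕ) : Finset (Fin n) :=
  (Finset.univ.filter fun j : Fin n => k ≤ (j : ℕ)).image σ

/-- `A_σ^↓(k) = {σ(j) : j < k}` (0-indexed; `Adown σ 0 = ∅`). -/
def Adown {n : ℕ} (σ : Equiv.Perm (Fin n)) (k : ℕ) : Finset (Fin n) :=
  (Finset.univ.filter fun j : Fin n => (j : ℕ) < k).image σ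

/-- The symmetric Lovász extension of `ψ`: `Ľ_ψ(x) = ψ(0) + L_ψ(x⁺) − L_ψ(x⁻)`. -/
def SLov {n : ℕ} (ψ : Finset (Fin n) → ℝ) (x : Fin n → ℝ) : ℝ :=
  ψ ∅ + Lov ψ (fun i => max (x i) 0) - Lov ψ (fun i => max (-(x i)) 0)

/-- `f` is comonotonically modular on `Iⁿ`:
`f(x) + f(x′) = f(x ∧ x′) + f(x ∨ x′)` for all comonotonic `x, x′ ∈ Iⁿ`. -/
def ComonModular {n : ℕ} (I : Set ℝ) (f : (Fin n → ℝ) → ℝ) : Prop :=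
  ∀ σ : Equiv.Perm (Fin n), ∀ x y : Fin n → ℝ,
    (∀ i, x i ∈ I) → (∀ i, y i ∈ I) → inRσ σ x → inRσ σ y →
    f x + f y = f (fun i => min (x i) (y i)) + f (fun i => max (x i) (y i))

/-- Odd homogeneity of `h : Iⁿ → ℝ` for `I` centered at `0`. -/
def OddlyHom {n : ℕ} (I : Set ℝ) (h : (Fin n → ℝ) → ℝ) : Prop :=
  ∃ χ : ℝ → ℝ, MonotoneOn χ I ∧ (∀ x ∈ I, χ (-x) = -(χ x)) ∧
    ∀ x ∈ I, ∀ A : Finset (Fin n), h (fun i => x * ind A i) = χ x * h (ind A)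

/-- `f : Iⁿ → ℝ` is a symmetric quasi-Lovász extension: `f = Ľ ∘ φ` for a symmetric Lovász
extension `Ľ` and a nondecreasing odd `φ : I → ℝ`. -/
def IsSymQLE {n : ℕ} (I : Set ℝ) (f : (Fin n → ℝ) → ℝ) : Prop :=
  ∃ ψ : Finset (Fin n) → ℝ, ∃ φ : ℝ → ℝ,
    MonotoneOn φ I ∧ (∀ x ∈ I, φ (-x) = -(φ x)) ∧
    ∀ x : Fin n → ℝ, (∀ i, x i ∈ I) → f x = SLov ψ (fun i => φ (x i))

/-!
On a chain `z_{σ 0} ≤ ⋯ ≤ z_{σ (n-1)}` the Lovász extension is linear in `z`: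
`L_ψ z = ψ ∅ + ∑ k, z_{σ k} (ψ (Aup σ k) - ψ (Aup σ (k + 1)))`, as one sees by grouping the
Möbius sum according to the first element of each set along `σ`. This yields everything needed
about `Ľ_ψ`: comonotonic modularity, `Ľ_ψ (c z) - ψ ∅ = c (Ľ_ψ z - ψ ∅)`, and affinity in `ψ`.

Conversely, a comonotonically modular `f` telescopes on a nonnegative chain into the same sum
with `f (x_{σ k} 1_{Aup σ k})` in place of `x_{σ k} ψ (Aup σ k)`, and odd homogeneity turns these
terms into `χ (x_{σ k}) f_0 (1_{Aup σ k})`; the nonpositive part of `x` is the nonnegative part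
for `f (-·)`. Hence `f = Ľ_{f|{0,1}ⁿ} ∘ χ`. Since `f` is not constant, `f_0 (1_A) ≠ 0` for
some `A`, which forces `χ 1 = 1` and allows normalizing `φ` by `φ 1` in a quasi-Lovász
representation.
-/

section
variable {n : ℕ}

lemma ind_empty : ind (∅ : Finset (Fin n)) = fun _ => 0 := by
  funext i; simp [ind]

lemma ind_nonneg (A : Finset (Fin n)) (i : Fin n) : 0 ≤ ind A i := by
  unfold ind; split_ifs <;> norm_num

lemma mul_ind_mem {I : Set ℝ} (h0 : (0 : ℝ) ∈ I) {t : ℝ} (ht : t ∈ I) (A : Finset (Fin n))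
    (i : Fin n) : t * ind A i ∈ I := by
  unfold ind; split_ifs <;> simpa

lemma ind_mem {I : Set ℝ} (h0 : (0 : ℝ) ∈ I) (h1 : (1 : ℝ) ∈ I) (A : Finset (Fin n))
    (i : Fin n) : ind A i ∈ I := by
  simpa using mul_ind_mem h0 h1 A i

lemma apply_zero_of_odd {I : Set ℝ} {φ : ℝ → ℝ} (hodd : ∀ x ∈ I, φ (-x) = -(φ x))
    (h0 : (0 : ℝ) ∈ I) : φ 0 = 0 := by
  have := hodd 0 h0
  rw [neg_zero] at this
  linarith

lemma exists_inRσ (x : Fin n → ℝ) : ∃ σ : Equiv.Perm (Fin n), inRσ σ x :=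
  ⟨Tuple.sort x, fun _ _ hij => Tuple.monotone_sort x hij⟩

lemma inRσ.comp_monotone {σ : Equiv.Perm (Fin n)} {x : Fin n → ℝ} (hx : inRσ σ x)
    {g : ℝ → ℝ} (hg : Monotone g) : inRσ σ (fun i => g (x i)) :=
  fun i j hij => hg (hx i j hij)

lemma inRσ.comp_monotoneOn {σ : Equiv.Perm (Fin n)} {x : Fin n → ℝ} (hx : inRσ σ x)
    {I : Set ℝ} {g : ℝ → ℝ} (hg : MonotoneOn g I) (hxI : ∀ i, x i ∈ I) :
    inRσ σ (fun i => g (x i)) :=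
  fun i j hij => hg (hxI _) (hxI _) (hx i j hij)

lemma inRσ.comp_antitone {σ : Equiv.Perm (Fin n)} {x : Fin n → ℝ} (hx : inRσ σ x)
    {g : ℝ → ℝ} (hg : Antitone g) : inRσ (Fin.revPerm.trans σ) (fun i => g (x i)) :=
  fun _ _ hij => hg (hx _ _ (Fin.rev_le_rev.mpr hij))

lemma mem_Aup {σ : Equiv.Perm (Fin n)} {k : ℕ} {i : Fin n} :
    i ∈ Aup σ k ↔ k ≤ (σ.symm i : ℕ) := by
  simp only [Aup, mem_image, mem_filter, mem_univ, true_and]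
  exact ⟨fun ⟨j, hj, hji⟩ => by simpa [← hji] using hj, fun h => ⟨σ.symm i, h, by simp⟩⟩

lemma Aup_zero (σ : Equiv.Perm (Fin n)) : Aup σ 0 = univ := by
  ext i; simp [mem_Aup]

lemma Aup_self (σ : Equiv.Perm (Fin n)) : Aup σ n = ∅ := by
  ext i; simp [mem_Aup, (σ.symm i).is_lt]

lemma notMem_Aup_succ (σ : Equiv.Perm (Fin n)) (k : Fin n) : σ k ∉ Aup σ ((k : ℕ) + 1) := by
  simp [mem_Aup]

lemma Aup_eq_insert (σ : Equiv.Perm (Fin n)) (k : Fin n) :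
    Aup σ k = insert (σ k) (Aup σ ((k : ℕ) + 1)) := by
  ext i
  simp only [mem_insert, mem_Aup, ← Equiv.symm_apply_eq, Fin.ext_iff]
  omega

lemma sum_powerset_filter_neg_one_pow {α : Type*} [DecidableEq α] {C S : Finset α}
    (hCS : C ⊆ S) :
    ∑ B ∈ S.powerset with C ⊆ B, (-1 : ℝ) ^ (#B - #C) = if C = S then 1 else 0 := by
  have hshift : ∑ B ∈ S.powerset with C ⊆ B, (-1 : ℝ) ^ (#B - #C)
      = ∑ D ∈ (S \ C).powerset, (-1 : ℝ) ^ #D := by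
    refine sum_nbij' (fun B => B \ C) (fun D => D ∪ C) ?_ ?_ ?_ ?_ ?_
    · intro B hB
      simp only [mem_filter, mem_powerset] at hB ⊢
      exact sdiff_subset_sdiff hB.1 le_rfl
    · intro D hD
      simp only [mem_filter, mem_powerset] at hD ⊢
      exact ⟨union_subset (hD.trans sdiff_subset) hCS, subset_union_right⟩
    · intro B hB
      simp only [mem_filter, mem_powerset] at hB
      exact sdiff_union_of_subset hB.2
    · intro D hD
      simp only [mem_powerset] at hD
      rw [union_sdiff_right, sdiff_eq_self_of_disjoint]
      exact disjoint_left.mpr fun a ha => (mem_sdiff.mp (hD ha)).2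
    · intro B hB
      simp only [mem_filter, mem_powerset] at hB
      rw [card_sdiff_of_subset hB.2]
  have hint := congrArg (fun z : ℤ => (z : ℝ)) (sum_powerset_neg_one_pow_card (x := S \ C))
  push_cast at hint
  rw [hshift, hint]
  exact if_congr (sdiff_eq_empty_iff_subset.trans
    ⟨fun h => subset_antisymm hCS h, fun h => h ▸ subset_rfl⟩) rfl rfl

lemma mobius_empty (ψ : Finset (Fin n) → ℝ) : mobius ψ ∅ = ψ ∅ := by
  simp [mobius]

lemma sum_powerset_mobius (ψ : Finset (Fin n) → ℝ) (S : Finset (Fin n)) :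
    ∑ B ∈ S.powerset, mobius ψ B = ψ S := by
  unfold mobius
  calc ∑ B ∈ S.powerset, ∑ C ∈ B.powerset, (-1 : ℝ) ^ (#B - #C) * ψ C
      = ∑ C ∈ S.powerset, ∑ B ∈ S.powerset with C ⊆ B, (-1 : ℝ) ^ (#B - #C) * ψ C := by
        refine sum_comm' fun B C => ?_
        simp only [mem_powerset, mem_filter]
        exact ⟨fun ⟨h1, h2⟩ => ⟨⟨h1, h2⟩, h2.trans h1⟩, fun ⟨⟨h1, h2⟩, _⟩ => ⟨h1, h2⟩⟩
    _ = ∑ C ∈ S.powerset, if C = S then ψ C else 0 := by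
        refine sum_congr rfl fun C hC => ?_
        rw [← sum_mul, sum_powerset_filter_neg_one_pow (mem_powerset.mp hC), ite_mul, one_mul,
          zero_mul]
    _ = ψ S := by simp

lemma minOnFin_eq_sum {σ : Equiv.Perm (Fin n)} {z : Fin n → ℝ} (hz : inRσ σ z)
    (B : Finset (Fin n)) :
    minOnFin B z = ∑ k, if σ k ∈ B ∧ B ⊆ Aup σ k then z (σ k) else 0 := by
  rcases B.eq_empty_or_nonempty with rfl | hB
  · simp [minOnFin]
  obtain ⟨b, hb, hmin⟩ := B.exists_min_image σ.symm hB
  have hfirst : ∀ k, (σ k ∈ B ∧ B ⊆ Aup σ k) ↔ k = σ.symm b := by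
    refine fun k => ⟨fun ⟨hk, hsub⟩ => le_antisymm ?_ ?_, ?_⟩
    · exact Fin.le_def.mpr (mem_Aup.mp (hsub hb))
    · simpa using hmin _ hk
    · rintro rfl
      exact ⟨by simpa using hb, fun c hc => mem_Aup.mpr (hmin c hc)⟩
  simp only [hfirst, sum_ite_eq', mem_univ, if_true, Equiv.apply_symm_apply]
  rw [minOnFin, dif_pos hB]
  exact le_antisymm (inf'_le _ hb) (le_inf' _ _ fun c hc => by simpa using hz _ _ (hmin c hc))

lemma sum_mobius_chain_fiber (ψ : Finset (Fin n) → ℝ) (σ : Equiv.Perm (Fin n)) (k : Fin n) :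
    ∑ B, (if σ k ∈ B ∧ B ⊆ Aup σ k then mobius ψ B else 0)
      = ψ (Aup σ k) - ψ (Aup σ ((k : ℕ) + 1)) := by
  have hsplit : ∀ B : Finset (Fin n), (if σ k ∈ B ∧ B ⊆ Aup σ k then mobius ψ B else 0)
      = (if B ⊆ Aup σ k then mobius ψ B else 0)
        - (if B ⊆ Aup σ ((k : ℕ) + 1) then mobius ψ B else 0) := by
    intro B
    rw [Aup_eq_insert σ k]
    by_cases hk : σ k ∈ B
    · have : ¬ B ⊆ Aup σ ((k : ℕ) + 1) := fun h => notMem_Aup_succ σ k (h hk)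
      simp [hk, this]
    · simp [hk, subset_insert_iff_of_notMem hk]
  simp only [hsplit, sum_sub_distrib, ← sum_filter]
  rw [← sum_powerset_mobius ψ (Aup σ k), ← sum_powerset_mobius ψ (Aup σ ((k : ℕ) + 1))]
  congr 2 <;> ext B <;> simp

theorem Lov_eq_sum_of_inRσ (ψ : Finset (Fin n) → ℝ) {σ : Equiv.Perm (Fin n)} {z : Fin n → ℝ}
    (hz : inRσ σ z) :
    Lov ψ z = ψ ∅ + ∑ k, z (σ k) * (ψ (Aup σ k) - ψ (Aup σ ((k : ℕ) + 1))) := by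
  simp only [Lov, mobius_empty, minOnFin_eq_sum hz, mul_sum]
  rw [sum_comm]
  congr 1
  refine sum_congr rfl fun k _ => ?_
  rw [← sum_mobius_chain_fiber, mul_sum]
  refine sum_congr rfl fun B _ => ?_
  split_ifs <;> ring

lemma Lov_affine (ψ : Finset (Fin n) → ℝ) (a c : ℝ) (z : Fin n → ℝ) :
    Lov (fun A => a + c * ψ A) z = a + c * Lov ψ z := by
  obtain ⟨σ, hσ⟩ := exists_inRσ z
  rw [Lov_eq_sum_of_inRσ _ hσ, Lov_eq_sum_of_inRσ _ hσ, mul_add, mul_sum, add_assoc]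
  congr 2
  exact sum_congr rfl fun k _ => by ring

lemma Lov_mul_of_nonneg (ψ : Finset (Fin n) → ℝ) {c : ℝ} (hc : 0 ≤ c) (z : Fin n → ℝ) :
    Lov ψ (fun i => c * z i) = ψ ∅ + c * (Lov ψ z - ψ ∅) := by
  obtain ⟨σ, hσ⟩ := exists_inRσ z
  have hcσ : inRσ σ (fun i => c * z i) := fun i j hij => mul_le_mul_of_nonneg_left (hσ i j hij) hc
  rw [Lov_eq_sum_of_inRσ _ hcσ, Lov_eq_sum_of_inRσ _ hσ, add_sub_cancel_left, mul_sum]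
  exact congrArg _ (sum_congr rfl fun k _ => by ring)

lemma Lov_zero (ψ : Finset (Fin n) → ℝ) : Lov ψ (fun _ => 0) = ψ ∅ := by
  simpa using Lov_mul_of_nonneg ψ le_rfl (fun _ => 0)

lemma minOnFin_ind (A B : Finset (Fin n)) :
    minOnFin B (ind A) = if B.Nonempty ∧ B ⊆ A then 1 else 0 := by
  rcases B.eq_empty_or_nonempty with rfl | hB
  · simp [minOnFin]
  rw [minOnFin, dif_pos hB]
  by_cases hBA : B ⊆ A
  · rw [if_pos ⟨hB, hBA⟩,
      inf'_congr (f := ind A) (g := fun _ => 1) hB rfl fun b hb => if_pos (hBA hb), inf'_const]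
  · obtain ⟨b, hb, hbA⟩ := not_subset.mp hBA
    rw [if_neg fun h => hBA h.2]
    exact le_antisymm ((inf'_le _ hb).trans_eq (if_neg hbA)) (le_inf' _ _ fun c _ => ind_nonneg A c)

lemma Lov_ind (ψ : Finset (Fin n) → ℝ) (A : Finset (Fin n)) : Lov ψ (ind A) = ψ A := by
  simp only [Lov, mobius_empty, minOnFin_ind, mul_ite, mul_one, mul_zero, ← sum_filter]
  have hfilter : ({B | B.Nonempty ∧ B ⊆ A} : Finset (Finset (Fin n))) = A.powerset.erase ∅ := by
    ext B; simp [nonempty_iff_ne_empty]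
  rw [hfilter, sum_erase_eq_sub (empty_mem_powerset A), sum_powerset_mobius, mobius_empty]
  ring

lemma Lov_min_add_Lov_max (ψ : Finset (Fin n) → ℝ) {σ : Equiv.Perm (Fin n)}
    {u v : Fin n → ℝ} (hu : inRσ σ u) (hv : inRσ σ v) :
    Lov ψ (fun i => min (u i) (v i)) + Lov ψ (fun i => max (u i) (v i)) = Lov ψ u + Lov ψ v := by
  rw [Lov_eq_sum_of_inRσ ψ (fun i j hij => min_le_min (hu i j hij) (hv i j hij)),
    Lov_eq_sum_of_inRσ ψ (fun i j hij => max_le_max (hu i j hij) (hv i j hij)),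
    Lov_eq_sum_of_inRσ ψ hu, Lov_eq_sum_of_inRσ ψ hv]
  have hterm : ∀ k, min (u (σ k)) (v (σ k)) + max (u (σ k)) (v (σ k)) = u (σ k) + v (σ k) :=
    fun k => min_add_max _ _
  simp only [add_add_add_comm, ← sum_add_distrib, ← add_mul, hterm]

lemma SLov_neg (ψ : Finset (Fin n) → ℝ) (z : Fin n → ℝ) :
    SLov ψ (fun i => -z i) = 2 * ψ ∅ - SLov ψ z := by
  simp only [SLov, neg_neg]
  ring

lemma SLov_mul (ψ : Finset (Fin n) → ℝ) (c : ℝ) (z : Fin n → ℝ) :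
    SLov ψ (fun i => c * z i) = ψ ∅ + c * (SLov ψ z - ψ ∅) := by
  have hnonneg : ∀ c : ℝ, 0 ≤ c → ∀ z : Fin n → ℝ,
      SLov ψ (fun i => c * z i) = ψ ∅ + c * (SLov ψ z - ψ ∅) := by
    intro c hc z
    have hpos : (fun i => max (c * z i) 0) = fun i => c * max (z i) 0 :=
      funext fun i => by rw [mul_max_of_nonneg _ _ hc, mul_zero]
    have hneg : (fun i => max (-(c * z i)) 0) = fun i => c * max (-z i) 0 :=
      funext fun i => by rw [mul_max_of_nonneg _ _ hc, mul_zero, mul_neg]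
    simp only [SLov, hpos, hneg, Lov_mul_of_nonneg ψ hc]
    ring
  rcases le_total 0 c with hc | hc
  · exact hnonneg c hc z
  · have := hnonneg (-c) (neg_nonneg.mpr hc) (fun i => -z i)
    simp only [neg_mul_neg, SLov_neg] at this
    rw [this]
    ring

lemma SLov_affine (ψ : Finset (Fin n) → ℝ) (a c : ℝ) (z : Fin n → ℝ) :
    SLov (fun A => a + c * ψ A) z = a + c * SLov ψ z := by
  simp only [SLov, Lov_affine]
  ring

lemma SLov_ind (ψ : Finset (Fin n) → ℝ) (A : Finset (Fin n)) : SLov ψ (ind A) = ψ A := by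
  have hpos : (fun i => max (ind A i) 0) = ind A := funext fun i => max_eq_left (ind_nonneg A i)
  have hneg : (fun i => max (-ind A i) 0) = fun _ => 0 :=
    funext fun i => max_eq_right (neg_nonpos.mpr (ind_nonneg A i))
  rw [SLov, hpos, hneg, Lov_ind, Lov_zero]
  ring

lemma SLov_comp_mul_ind (ψ : Finset (Fin n) → ℝ) {φ : ℝ → ℝ} (hφ0 : φ 0 = 0) (t : ℝ)
    (A : Finset (Fin n)) :
    SLov ψ (fun i => φ (t * ind A i)) = ψ ∅ + φ t * (ψ A - ψ ∅) := by
  have : (fun i => φ (t * ind A i)) = fun i => φ t * ind A i :=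
    funext fun i => by by_cases h : i ∈ A <;> simp [ind, h, hφ0]
  rw [this, SLov_mul, SLov_ind]

lemma SLov_min_add_SLov_max (ψ : Finset (Fin n) → ℝ) {σ : Equiv.Perm (Fin n)}
    {u v : Fin n → ℝ} (hu : inRσ σ u) (hv : inRσ σ v) :
    SLov ψ (fun i => min (u i) (v i)) + SLov ψ (fun i => max (u i) (v i))
      = SLov ψ u + SLov ψ v := by
  have hpos : Monotone fun t : ℝ => max t 0 := fun _ _ h => max_le_max h le_rfl
  have hneg : Antitone fun t : ℝ => max (-t) 0 := fun _ _ h => max_le_max (neg_le_neg h) le_rfl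
  have h1 := Lov_min_add_Lov_max ψ (hu.comp_monotone hpos) (hv.comp_monotone hpos)
  have h2 := Lov_min_add_Lov_max ψ (hu.comp_antitone hneg) (hv.comp_antitone hneg)
  simp only [SLov, hpos.map_min, hpos.map_max, hneg.map_min, hneg.map_max]
  linarith

lemma min_mul_ind_insert {x : Fin n → ℝ} {a : Fin n} {B : Finset (Fin n)} (ha : a ∉ B)
    (hxa : 0 ≤ x a) (hB : ∀ i ∈ B, x a ≤ x i) (i : Fin n) :
    min (x i * ind B i) (x a * ind (insert a B) i) = x a * ind B i := by
  by_cases hi : i ∈ B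
  · simp [ind, hi, hB i hi]
  · by_cases hia : i = a
    · subst hia; simp [ind, ha, hxa]
    · simp [ind, hi, hia]

lemma max_mul_ind_insert {x : Fin n → ℝ} {a : Fin n} {B : Finset (Fin n)} (ha : a ∉ B)
    (hxa : 0 ≤ x a) (hB : ∀ i ∈ B, x a ≤ x i) (i : Fin n) :
    max (x i * ind B i) (x a * ind (insert a B) i) = x i * ind (insert a B) i := by
  by_cases hi : i ∈ B
  · simp [ind, hi, hB i hi]
  · by_cases hia : i = a
    · subst hia; simp [ind, ha, hxa]
    · simp [ind, hi, hia]

lemma inRσ.mul_ind_Aup {σ : Equiv.Perm (Fin n)} {x : Fin n → ℝ} (hx : inRσ σ x)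
    (hx0 : ∀ i, 0 ≤ x i) (m : ℕ) : inRσ σ (fun i => x i * ind (Aup σ m) i) := by
  intro i j hij
  have hij' : (i : ℕ) ≤ j := hij
  simp only [ind, mem_Aup, Equiv.symm_apply_apply]
  split_ifs with hi hj hj
  · simpa using hx i j hij
  · omega
  · simpa using hx0 (σ j)
  · simp

/-- Telescoping of `f (x · 1_{Aup σ m})` from `m = 0` to `m = n`: the consecutive terms for
`m = k + 1, k` are the meet and join of a comonotonic pair whose other corners are
`x_{σ k} · 1_{Aup σ k}` and `x_{σ k} · 1_{Aup σ (k + 1)}`. -/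
theorem ComonModular.eq_add_sum_Aup {I : Set ℝ} {f : (Fin n → ℝ) → ℝ} (hm : ComonModular I f)
    (h0 : (0 : ℝ) ∈ I) {σ : Equiv.Perm (Fin n)} {x : Fin n → ℝ} (hxI : ∀ i, x i ∈ I)
    (hx : inRσ σ x) (hx0 : ∀ i, 0 ≤ x i) :
    f x = f (fun _ => 0) + ∑ k, (f (fun i => x (σ k) * ind (Aup σ k) i)
      - f (fun i => x (σ k) * ind (Aup σ ((k : ℕ) + 1)) i)) := by
  let F : ℕ → ℝ := fun m => f (fun i => x i * ind (Aup σ m) i)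
  have hF0 : F 0 = f x := by simp [F, Aup_zero, ind]
  have hFn : F n = f (fun _ => 0) := by simp [F, Aup_self, ind]
  have hstep : ∀ k : Fin n, F k - F ((k : ℕ) + 1) = f (fun i => x (σ k) * ind (Aup σ k) i)
      - f (fun i => x (σ k) * ind (Aup σ ((k : ℕ) + 1)) i) := by
    intro k
    have hle : ∀ i ∈ Aup σ ((k : ℕ) + 1), x (σ k) ≤ x i := fun i hi => by
      simpa using hx k (σ.symm i) (Fin.le_def.mpr (by have := mem_Aup.mp hi; omega))
    have hmin := funext (min_mul_ind_insert (notMem_Aup_succ σ k) (hx0 _) hle)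
    have hmax := funext (max_mul_ind_insert (notMem_Aup_succ σ k) (hx0 _) hle)
    rw [← Aup_eq_insert] at hmin hmax
    have := hm σ (fun i => x i * ind (Aup σ ((k : ℕ) + 1)) i)
      (fun i => x (σ k) * ind (Aup σ k) i) (fun i => mul_ind_mem h0 (hxI i) _ i)
      (fun i => mul_ind_mem h0 (hxI _) _ i) (hx.mul_ind_Aup hx0 _)
      (inRσ.mul_ind_Aup (x := fun _ => x (σ k)) (fun _ _ _ => le_rfl) (fun _ => hx0 _) _)
    rw [hmin, hmax] at this
    simp only [F]
    linarith
  rw [← hF0, ← hFn, ← sub_eq_iff_eq_add', ← sum_range_sub', ← Fin.sum_univ_eq_sum_range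
    (fun m => F m - F (m + 1))]
  exact sum_congr rfl fun k _ => hstep k

theorem ComonModular.comp_neg {I : Set ℝ} {f : (Fin n → ℝ) → ℝ} (hm : ComonModular I f)
    (hsym : ∀ x ∈ I, -x ∈ I) : ComonModular I (fun x => f (fun i => -x i)) := by
  intro σ x y hx hy hσx hσy
  have := hm _ _ _ (fun i => hsym _ (hx i)) (fun i => hsym _ (hy i))
    (hσx.comp_antitone fun _ _ h => neg_le_neg h) (hσy.comp_antitone fun _ _ h => neg_le_neg h)
  simp only [min_neg_neg, max_neg_neg] at this
  linarith

theorem ComonModular.eq_Lov_of_nonneg {I : Set ℝ} {f : (Fin n → ℝ) → ℝ}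
    (hm : ComonModular I f) (h0 : (0 : ℝ) ∈ I) {χ : ℝ → ℝ} (hχ : MonotoneOn χ I)
    {ψ : Finset (Fin n) → ℝ}
    (hhom : ∀ t ∈ I, ∀ A, f (fun i => t * ind A i) - f (fun _ => 0) = χ t * (ψ A - ψ ∅))
    {y : Fin n → ℝ} (hyI : ∀ i, y i ∈ I) (hy0 : ∀ i, 0 ≤ y i) :
    f y = f (fun _ => 0) + Lov ψ (fun i => χ (y i)) - ψ ∅ := by
  obtain ⟨σ, hσ⟩ := exists_inRσ y
  rw [hm.eq_add_sum_Aup h0 hyI hσ hy0, Lov_eq_sum_of_inRσ ψ (hσ.comp_monotoneOn hχ hyI)]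
  have hterm : ∀ k : Fin n, f (fun i => y (σ k) * ind (Aup σ k) i)
      - f (fun i => y (σ k) * ind (Aup σ ((k : ℕ) + 1)) i)
      = χ (y (σ k)) * (ψ (Aup σ k) - ψ (Aup σ ((k : ℕ) + 1))) := fun k => by
    linear_combination hhom _ (hyI (σ k)) (Aup σ k) - hhom _ (hyI (σ k)) (Aup σ ((k : ℕ) + 1))
  simp only [hterm]
  ring

theorem ComonModular.eq_SLov {I : Set ℝ} {f : (Fin n → ℝ) → ℝ} (hm : ComonModular I f)
    (h0 : (0 : ℝ) ∈ I) (hsym : ∀ x ∈ I, -x ∈ I) {χ : ℝ → ℝ} (hχ : MonotoneOn χ I)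
    (hodd : ∀ x ∈ I, χ (-x) = -(χ x))
    (hhom : ∀ t ∈ I, ∀ A, f (fun i => t * ind A i) - f (fun _ => 0)
      = χ t * (f (ind A) - f (fun _ => 0)))
    {x : Fin n → ℝ} (hx : ∀ i, x i ∈ I) :
    f x = SLov (fun A => f (ind A)) (fun i => χ (x i)) := by
  set ψ : Finset (Fin n) → ℝ := fun A => f (ind A)
  have hψ0 : ψ ∅ = f (fun _ => 0) := by simp only [ψ, ind_empty]
  have hχ0 : χ 0 = 0 := apply_zero_of_odd hodd h0
  obtain ⟨σ, hσ⟩ := exists_inRσ x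
  -- `x` and `0` are comonotonic, and `f (x ⊓ 0)` is `f (-·)` at the nonnegative `(-x) ⊔ 0`.
  have hsplit := hm σ x (fun _ => 0) hx (fun _ => h0) hσ fun _ _ _ => le_rfl
  have hmin : (fun i => min (x i) 0) = fun i => -max (-x i) 0 :=
    funext fun i => by rw [← neg_zero, max_neg_neg, neg_neg, neg_zero]
  have hpos := hm.eq_Lov_of_nonneg h0 hχ (ψ := ψ) (by rwa [hψ0])
    (fun i => max_rec' _ (hx i) h0) fun i => le_max_right _ _
  have hneg := (hm.comp_neg hsym).eq_Lov_of_nonneg h0 hχ (ψ := fun A => -ψ A)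
    (fun t ht A => by
      simp only [← neg_mul, neg_zero, hψ0]
      linear_combination hhom _ (hsym t ht) A + (f (ind A) - f (fun _ => 0)) * hodd t ht)
    (fun i => max_rec' _ (hsym _ (hx i)) h0) fun i => le_max_right _ _
  have hLov_neg : ∀ z, Lov (fun A => -ψ A) z = -Lov ψ z := fun z => by
    simpa using Lov_affine ψ 0 (-1) z
  have hχpos : (fun i => χ (max (x i) 0)) = fun i => max (χ (x i)) 0 :=
    funext fun i => by rw [hχ.map_max (hx i) h0, hχ0]
  have hχneg : (fun i => χ (max (-x i) 0)) = fun i => max (-χ (x i)) 0 :=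
    funext fun i => by rw [hχ.map_max (hsym _ (hx i)) h0, hχ0, hodd _ (hx i)]
  rw [hmin] at hsplit
  rw [hχpos] at hpos
  rw [hχneg, hLov_neg] at hneg
  simp only [neg_zero] at hneg
  rw [SLov]
  linarith

theorem comonModular_of_eq_SLov_comp {I : Set ℝ} {f : (Fin n → ℝ) → ℝ}
    {ψ : Finset (Fin n) → ℝ} {φ : ℝ → ℝ} (hφ : MonotoneOn φ I)
    (hf : ∀ x : Fin n → ℝ, (∀ i, x i ∈ I) → f x = SLov ψ (fun i => φ (x i))) :
    ComonModular I f := by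
  intro σ x y hx hy hσx hσy
  have hmin : (fun i => φ (min (x i) (y i))) = fun i => min (φ (x i)) (φ (y i)) :=
    funext fun i => hφ.map_min (hx i) (hy i)
  have hmax : (fun i => φ (max (x i) (y i))) = fun i => max (φ (x i)) (φ (y i)) :=
    funext fun i => hφ.map_max (hx i) (hy i)
  rw [hf x hx, hf y hy, hf _ fun i => min_rec' _ (hx i) (hy i),
    hf _ fun i => max_rec' _ (hx i) (hy i), hmin, hmax]
  exact (SLov_min_add_SLov_max ψ (hσx.comp_monotoneOn hφ hx) (hσy.comp_monotoneOn hφ hy)).symm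

theorem oddlyHom_of_eq_SLov_comp {I : Set ℝ} {f : (Fin n → ℝ) → ℝ} (h0 : (0 : ℝ) ∈ I)
    {φ : ℝ → ℝ} (hφ : MonotoneOn φ I) (hodd : ∀ x ∈ I, φ (-x) = -(φ x))
    (hf : ∀ x : Fin n → ℝ, (∀ i, x i ∈ I) → f x = SLov (fun A => f (ind A)) (fun i => φ (x i))) :
    OddlyHom I (fun y => f y - f (fun _ => 0)) := by
  refine ⟨φ, hφ, hodd, fun t ht A => ?_⟩
  dsimp only
  rw [hf _ (mul_ind_mem h0 ht A), SLov_comp_mul_ind _ (apply_zero_of_odd hodd h0), ← ind_empty]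
  ring

theorem exists_ind_ne_of_eq_SLov_comp {I : Set ℝ} {f : (Fin n → ℝ) → ℝ}
    (hnc : ∃ x y : Fin n → ℝ, (∀ i, x i ∈ I) ∧ (∀ i, y i ∈ I) ∧ f x ≠ f y) {φ : ℝ → ℝ}
    (hf : ∀ x : Fin n → ℝ, (∀ i, x i ∈ I) → f x = SLov (fun A => f (ind A)) (fun i => φ (x i))) :
    ∃ A : Finset (Fin n), f (ind A) - f (fun _ => 0) ≠ 0 := by
  by_contra! hconst
  obtain ⟨x, y, hx, hy, hne⟩ := hnc
  have hψ : (fun A => f (ind A)) = fun A => f (fun _ => 0) + 0 * f (ind A) :=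
    funext fun A => by linarith [hconst A]
  apply hne
  rw [hf x hx, hf y hy, hψ, SLov_affine, SLov_affine]
  ring

theorem IsSymQLE.exists_normalized {I : Set ℝ} {f : (Fin n → ℝ) → ℝ} (hQ : IsSymQLE I f)
    (h0 : (0 : ℝ) ∈ I) (h1 : (1 : ℝ) ∈ I)
    (hA : ∃ A : Finset (Fin n), f (ind A) - f (fun _ => 0) ≠ 0) :
    ∃ φf : ℝ → ℝ, MonotoneOn φf I ∧ (∀ x ∈ I, φf (-x) = -(φf x)) ∧ φf 1 = 1 ∧
      ∀ x : Fin n → ℝ, (∀ i, x i ∈ I) →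
        f x = SLov (fun A => f (ind A)) (fun i => φf (x i)) := by
  obtain ⟨ψ, φ, hφ, hodd, hf⟩ := hQ
  obtain ⟨A, hA⟩ := hA
  have hφ0 : φ 0 = 0 := apply_zero_of_odd hodd h0
  have hfind : ∀ A, f (ind A) = ψ ∅ + φ 1 * (ψ A - ψ ∅) := fun A => by
    have := SLov_comp_mul_ind ψ hφ0 1 A
    simp only [one_mul] at this
    rw [hf _ (ind_mem h0 h1 A), this]
  have hf0 : f (fun _ => 0) = ψ ∅ := by rw [← ind_empty, hfind]; ring
  have hc : 0 < φ 1 := lt_of_le_of_ne (hφ0 ▸ hφ h0 h1 zero_le_one)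
    fun h => hA (by rw [hfind, hf0, ← h]; ring)
  refine ⟨fun t => φ t / φ 1, fun a ha b hb hab => div_le_div_of_nonneg_right (hφ ha hb hab) hc.le,
    fun t ht => by dsimp only; rw [hodd t ht, neg_div], div_self hc.ne', fun x hx => ?_⟩
  have hψ : (fun A => f (ind A)) = fun A => (ψ ∅ - φ 1 * ψ ∅) + φ 1 * ψ A :=
    funext fun A => by rw [hfind]; ring
  have hφx : (fun i => φ (x i)) = fun i => φ 1 * (φ (x i) / φ 1) :=
    funext fun i => (mul_div_cancel₀ _ hc.ne').symm
  rw [hf x hx, hψ, SLov_affine, hφx, SLov_mul]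
  ring

theorem ComonModular.exists_eq_SLov_comp {I : Set ℝ} {f : (Fin n → ℝ) → ℝ}
    (hm : ComonModular I f) (hoh : OddlyHom I (fun y => f y - f (fun _ => 0)))
    (h0 : (0 : ℝ) ∈ I) (h1 : (1 : ℝ) ∈ I) (hsym : ∀ x ∈ I, -x ∈ I)
    (hnc : ∃ x y : Fin n → ℝ, (∀ i, x i ∈ I) ∧ (∀ i, y i ∈ I) ∧ f x ≠ f y) :
    ∃ φf : ℝ → ℝ, MonotoneOn φf I ∧ (∀ x ∈ I, φf (-x) = -(φf x)) ∧ φf 1 = 1 ∧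
      ∀ x : Fin n → ℝ, (∀ i, x i ∈ I) →
        f x = SLov (fun A => f (ind A)) (fun i => φf (x i)) := by
  obtain ⟨χ, hχ, hodd, hhom⟩ := hoh
  have hf := fun (x : Fin n → ℝ) (hx : ∀ i, x i ∈ I) => hm.eq_SLov h0 hsym hχ hodd hhom hx
  obtain ⟨A, hA⟩ := exists_ind_ne_of_eq_SLov_comp hnc hf
  refine ⟨χ, hχ, hodd, ?_, hf⟩
  have := hhom 1 h1 A
  simp only [one_mul] at this
  exact (mul_eq_right₀ hA).mp this.symm
end

theorem stmt18_general {n : ℕ} (I : Set ℝ)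
    (hsym : ∀ x ∈ I, -x ∈ I) (hI1 : Set.Icc (-1 : ℝ) 1 ⊆ I)
    (f : (Fin n → ℝ) → ℝ)
    (hnc : (∃ x y : Fin n → ℝ, (∀ i, x i ∈ I ∩ Set.Ici (0 : ℝ)) ∧
              (∀ i, y i ∈ I ∩ Set.Ici (0 : ℝ)) ∧ f x ≠ f y) ∨
           (∃ x y : Fin n → ℝ, (∀ i, x i ∈ I ∩ Set.Iic (0 : ℝ)) ∧
              (∀ i, y i ∈ I ∩ Set.Iic (0 : ℝ)) ∧ f x ≠ f y)) :
    ((IsSymQLE I f ∧ ∃ A : Finset (Fin n), f (ind A) - f (fun _ => 0) ≠ 0) ↔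
       (ComonModular I f ∧ OddlyHom I (fun y => f y - f (fun _ => 0)))) ∧
    ((ComonModular I f ∧ OddlyHom I (fun y => f y - f (fun _ => 0))) ↔
       ∃ φf : ℝ → ℝ, MonotoneOn φf I ∧ (∀ x ∈ I, φf (-x) = -(φf x)) ∧ φf 1 = 1 ∧
         ∀ x : Fin n → ℝ, (∀ i, x i ∈ I) →
           f x = SLov (fun A => f (ind A)) (fun i => φf (x i))) := by
  have h0 : (0 : ℝ) ∈ I := hI1 ⟨by norm_num, by norm_num⟩
  have h1 : (1 : ℝ) ∈ I := hI1 ⟨by norm_num, le_rfl⟩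
  have hnc' : ∃ x y : Fin n → ℝ, (∀ i, x i ∈ I) ∧ (∀ i, y i ∈ I) ∧ f x ≠ f y := by
    rcases hnc with ⟨x, y, hx, hy, hne⟩ | ⟨x, y, hx, hy, hne⟩ <;>
      exact ⟨x, y, fun i => (hx i).1, fun i => (hy i).1, hne⟩
  refine ⟨⟨fun ⟨hQ, hA⟩ => ?_, fun ⟨hm, hoh⟩ => ?_⟩,
    ⟨fun ⟨hm, hoh⟩ => hm.exists_eq_SLov_comp hoh h0 h1 hsym hnc', fun ⟨φ, hφ, hodd, _, hf⟩ => ?_⟩⟩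
  · obtain ⟨φ, hφ, hodd, _, hf⟩ := hQ.exists_normalized h0 h1 hA
    exact ⟨comonModular_of_eq_SLov_comp hφ hf, oddlyHom_of_eq_SLov_comp h0 hφ hodd hf⟩
  · obtain ⟨φ, hφ, hodd, _, hf⟩ := hm.exists_eq_SLov_comp hoh h0 h1 hsym hnc'
    exact ⟨⟨_, φ, hφ, hodd, hf⟩, exists_ind_ne_of_eq_SLov_comp hnc' hf⟩
  · exact ⟨comonModular_of_eq_SLov_comp hφ hf, oddlyHom_of_eq_SLov_comp h0 hφ hodd hf⟩

/-- For `I` centered at `0` with `[−1,1] ⊆ I` and `f : Iⁿ → ℝ` whose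
restriction to `(I ∩ ℝ₊)ⁿ` or `(I ∩ ℝ₋)ⁿ` is nonconstant, TFAE:
(i) `f` is a symmetric quasi-Lovász extension and `f_0(1_A) ≠ 0` for some `A`;
(ii) `f` is comonotonically modular and `f_0` is oddly homogeneous;
(iii) there is a nondecreasing odd `φ_f : I → ℝ` with `φ_f(1) = 1` and
`f = Ľ_{f|_{{0,1}ⁿ}} ∘ φ_f`. -/
theorem stmt18 {n : ℕ} (I : Set ℝ) (hI : I.OrdConnected)
    (hsym : ∀ x ∈ I, -x ∈ I) (hI1 : Set.Icc (-1 : ℝ) 1 ⊆ I)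
    (f : (Fin n → ℝ) → ℝ)
    (hnc : (∃ x y : Fin n → ℝ, (∀ i, x i ∈ I ∩ Set.Ici (0 : ℝ)) ∧
              (∀ i, y i ∈ I ∩ Set.Ici (0 : ℝ)) ∧ f x ≠ f y) ∨
           (∃ x y : Fin n → ℝ, (∀ i, x i ∈ I ∩ Set.Iic (0 : ℝ)) ∧
              (∀ i, y i ∈ I ∩ Set.Iic (0 : ℝ)) ∧ f x ≠ f y)) :
    ((IsSymQLE I f ∧ ∃ A : Finset (Fin n), f (ind A) - f (fun _ => 0) ≠ 0) ↔
       (ComonModular I f ∧ OddlyHom I (fun y => f y - f (fun _ => 0)))) ∧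
    ((ComonModular I f ∧ OddlyHom I (fun y => f y - f (fun _ => 0))) ↔
       ∃ φf : ℝ → ℝ, MonotoneOn φf I ∧ (∀ x ∈ I, φf (-x) = -(φf x)) ∧ φf 1 = 1 ∧
         ∀ x : Fin n → ℝ, (∀ i, x i ∈ I) →
           f x = SLov (fun A => f (ind A)) (fun i => φf (x i))) :=
  stmt18_general I hsym hI1 f hnc
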